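/- arXiv:2603.12220 — 3 statements merged into one kernel-verified Lean document; each statement's English description precedes it below -/
import Mathlib

section
/- (Deterministic inclusion with measurement noise) Let M̃ be an n_x × (n_x + n_u) matrix, Z_v ⊆ R^{n_x} a set containing 0 and symmetric about the origin (v ∈ Z_v implies -v ∈ Z_v), and define R_0 = X_0 and R_{k+1} = M̃((R_k ⊕ Z_v) × U) ⊕ ⟨0, q_k I⟩ ⊕ Z_v. Suppose states x(k), observations y(k), noises v(k) and inputs u(k) satisfy y(0) ∈ X_0, u(k) ∈ U, v(k) ∈ Z_v, x(k) = y(k) - v(k), and ‖y(k+1) - M̃[y(k); u(k)]‖_∞ ≤ q_k for all k. Then y(k) ∈ R_k for all k = 0, ..., N, and x(k) ∈ R_k ⊕ (-Z_v) for all k. -/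
open Pointwise

/-- The hypercube `[-q, q]^{n}`, i.e. the zonotope `⟨0, q·I⟩`. -/
def cube (n : ℕ) (q : ℝ) : Set (Fin n → ℝ) := {w | ∀ i, |w i| ≤ q}

/-- Deterministic inclusion for the LTI reachable-set recursion with bounded
measurement noise. -/
theorem deterministic_inclusion_LTI_meas {nx nu : ℕ} (N : ℕ)
    (M : Matrix (Fin nx) (Fin nx ⊕ Fin nu) ℝ)
    (X₀ : Set (Fin nx → ℝ)) (U : Set (Fin nu → ℝ))
    (Zv : Set (Fin nx → ℝ)) (hZv0 : (0 : Fin nx → ℝ) ∈ Zv)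
    (hZvsymm : ∀ v ∈ Zv, -v ∈ Zv)
    (q : ℕ → ℝ)
    (R : ℕ → Set (Fin nx → ℝ))
    (hR0 : R 0 = X₀)
    (hRsucc : ∀ k, k < N →
      R (k + 1) =
        ((fun pr : (Fin nx → ℝ) × (Fin nu → ℝ) =>
            M.mulVec (Sum.elim pr.1 pr.2)) '' ((R k + Zv) ×ˢ U))
          + cube nx (q k) + Zv)
    (x y : ℕ → Fin nx → ℝ) (v : ℕ → Fin nx → ℝ) (u : ℕ → Fin nu → ℝ)
    (hy0 : y 0 ∈ X₀) (hu : ∀ k, k < N → u k ∈ U)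
    (hv : ∀ k, k ≤ N → v k ∈ Zv)
    (hxy : ∀ k, k ≤ N → x k = y k - v k)
    (hres : ∀ k, k < N →
      ∀ i, |(y (k + 1) - M.mulVec (Sum.elim (y k) (u k))) i| ≤ q k) :
    (∀ k, k ≤ N → y k ∈ R k) ∧ (∀ k, k ≤ N → x k ∈ R k + -Zv) := by
  have hy : ∀ k, k ≤ N → y k ∈ R k := by
    intro k
    induction k with
    | zero => intro _; rw [hR0]; exact hy0
    | succ k ih =>
      intro hk
      have hkN : k < N := Nat.lt_of_succ_le hk
      rw [hRsucc k hkN]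
      have hyk : y k ∈ R k + Zv := ⟨y k, ih (Nat.le_of_lt hkN), 0, hZv0, by simp⟩
      have himg : M.mulVec (Sum.elim (y k) (u k)) ∈
          ((fun pr : (Fin nx → ℝ) × (Fin nu → ℝ) =>
            M.mulVec (Sum.elim pr.1 pr.2)) '' ((R k + Zv) ×ˢ U)) :=
        ⟨(y k, u k), ⟨hyk, hu k hkN⟩, rfl⟩
      have hw : (y (k+1) - M.mulVec (Sum.elim (y k) (u k))) ∈ cube nx (q k) :=
        hres k hkN
      have : M.mulVec (Sum.elim (y k) (u k)) +
          (y (k+1) - M.mulVec (Sum.elim (y k) (u k))) + 0 ∈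
          ((fun pr : (Fin nx → ℝ) × (Fin nu → ℝ) =>
            M.mulVec (Sum.elim pr.1 pr.2)) '' ((R k + Zv) ×ˢ U))
          + cube nx (q k) + Zv :=
        Set.add_mem_add (Set.add_mem_add himg hw) hZv0
      simpa using this
  refine ⟨hy, fun k hk => ?_⟩
  rw [hxy k hk]
  exact ⟨y k, hy k hk, -(v k), Set.neg_mem_neg.mpr (hv k hk), by abel⟩
end

section
/- (Hoeffding bound for binomial tail via KL divergence) Let X ~ Bin(n, p) with 0 < p < 1, and let 0 ≤ q < p. Then P(X ≤ n q) ≤ exp(-n · kl(q ‖ p)), where kl(q ‖ p) = q ln(q/p) + (1-q) ln((1-q)/(1-p)) (with the convention 0 ln 0 = 0). -/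
/-- Binary KL divergence between Bernoulli(q) and Bernoulli(p)
(with `Real.log 0 = 0`, matching the convention `0 · ln 0 = 0`). -/
noncomputable def klBer (q p : ℝ) : ℝ :=
  q * Real.log (q / p) + (1 - q) * Real.log ((1 - q) / (1 - p))

/-- Hoeffding bound for the binomial lower tail via KL divergence:
for `X ~ Bin(n, p)` and `0 ≤ q < p < 1`,
`P(X ≤ n q) ≤ exp(-n · kl(q ‖ p))`. -/
theorem binomial_tail_hoeffding (n : ℕ) (p q : ℝ)
    (hp0 : 0 < p) (hp1 : p < 1) (hq0 : 0 ≤ q) (hqp : q < p) :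
    ∑ k ∈ (Finset.range (n + 1)).filter (fun k : ℕ => (k : ℝ) ≤ n * q),
        (n.choose k : ℝ) * p ^ k * (1 - p) ^ (n - k)
      ≤ Real.exp (-(n : ℝ) * klBer q p) := by
  have h1p : (0:ℝ) < 1 - p := by linarith
  rcases eq_or_lt_of_le hq0 with hq | hq
  · -- q = 0 case
    subst hq
    have hfil : (Finset.range (n + 1)).filter (fun k : ℕ => (k : ℝ) ≤ n * 0) = {0} := by
      ext k
      simp only [Finset.mem_filter, Finset.mem_range, Finset.mem_singleton, mul_zero]
      constructor
      · rintro ⟨-, h⟩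
        exact_mod_cast le_antisymm (by exact_mod_cast h) (Nat.zero_le k)
      · rintro rfl; exact ⟨Nat.succ_pos n, by norm_num⟩
    rw [hfil]
    simp only [Finset.sum_singleton, Nat.choose_zero_right, pow_zero, Nat.cast_one, one_mul,
      mul_one, Nat.sub_zero]
    have hkl : klBer 0 p = - Real.log (1 - p) := by
      simp [klBer, Real.log_div one_ne_zero (by linarith : (1:ℝ) - p ≠ 0)]
    rw [hkl]
    have : Real.exp (-(n:ℝ) * -Real.log (1 - p)) = (1 - p) ^ n := by
      rw [neg_mul_neg, ← Real.log_pow, Real.exp_log (pow_pos h1p n)]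
    rw [this]
  · -- 0 < q case
    have h1q : (0:ℝ) < 1 - q := by linarith
    set r : ℝ := q * (1 - p) / (p * (1 - q)) with hr
    have hr0 : 0 < r := by positivity
    have hr1 : r < 1 := by
      rw [hr, div_lt_one (by positivity)]
      nlinarith
    -- step 1: bound sum by full Chernoff sum
    have key : ∀ k ∈ Finset.range (n + 1),
        (if (k : ℝ) ≤ n * q then (n.choose k : ℝ) * p ^ k * (1 - p) ^ (n - k) else 0)
        ≤ r ^ ((k : ℝ) - n * q) * ((n.choose k : ℝ) * p ^ k * (1 - p) ^ (n - k)) := by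
      intro k _
      split_ifs with h
      · have h1 : (1:ℝ) ≤ r ^ ((k : ℝ) - n * q) := by
          have := Real.rpow_le_rpow_of_exponent_ge hr0 hr1.le (by linarith : (k:ℝ) - n*q ≤ 0)
          rwa [Real.rpow_zero] at this
        nlinarith [mul_nonneg (mul_nonneg (Nat.cast_nonneg (n.choose k)) (pow_nonneg hp0.le k)) (pow_nonneg h1p.le (n-k))]
      · positivity
    have step1 : ∑ k ∈ (Finset.range (n + 1)).filter (fun k : ℕ => (k : ℝ) ≤ n * q),
          (n.choose k : ℝ) * p ^ k * (1 - p) ^ (n - k)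
        ≤ ∑ k ∈ Finset.range (n + 1),
          r ^ ((k : ℝ) - n * q) * ((n.choose k : ℝ) * p ^ k * (1 - p) ^ (n - k)) := by
      rw [Finset.sum_filter]
      exact Finset.sum_le_sum key
    -- step 2: evaluate the Chernoff sum
    have step2 : ∑ k ∈ Finset.range (n + 1),
          r ^ ((k : ℝ) - n * q) * ((n.choose k : ℝ) * p ^ k * (1 - p) ^ (n - k))
        = r ^ (-((n:ℝ) * q)) * ((p * r + (1 - p)) ^ n) := by
      rw [add_pow, Finset.mul_sum]
      apply Finset.sum_congr rfl
      intro k hk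
      rw [sub_eq_add_neg, Real.rpow_add hr0, Real.rpow_natCast, mul_pow]
      ring
    have hpr : p * r + (1 - p) = (1 - p) / (1 - q) := by
      rw [hr]; field_simp; ring
    -- step 3: rewrite RHS as exp
    have step3 : r ^ (-((n:ℝ) * q)) * ((p * r + (1 - p)) ^ n)
        = Real.exp (-(n : ℝ) * klBer q p) := by
      rw [hpr]
      have hb : (0:ℝ) < (1 - p) / (1 - q) := by positivity
      rw [Real.rpow_def_of_pos hr0, ← Real.exp_log (pow_pos hb n), Real.log_pow,
        ← Real.exp_add]
      congr 1
      have hlr : Real.log r = Real.log q + Real.log (1 - p) - Real.log p - Real.log (1 - q) := by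
        rw [hr, Real.log_div (by positivity) (by positivity),
          Real.log_mul (ne_of_gt hq) (ne_of_gt h1p),
          Real.log_mul (ne_of_gt hp0) (ne_of_gt h1q)]
        ring
      have hkl : klBer q p = q * (Real.log q - Real.log p)
          + (1 - q) * (Real.log (1 - q) - Real.log (1 - p)) := by
        rw [klBer, Real.log_div (ne_of_gt hq) (ne_of_gt hp0),
          Real.log_div (ne_of_gt h1q) (ne_of_gt h1p)]
      rw [hlr, hkl, Real.log_div (ne_of_gt h1p) (ne_of_gt h1q)]
      ring
    calc _ ≤ _ := step1
    _ = _ := step2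
    _ = _ := step3
end

section
/- (Quantile coverage under exchangeability, discrete version) Let s_1, ..., s_{n+1} be exchangeable real random variables (their joint law is invariant under permutations) with almost surely no ties. Let q̂ be the ⌈(1-α)(n+1)⌉-th smallest value among s_1, ..., s_n (with q̂ = +∞ if ⌈(1-α)(n+1)⌉ > n). Then P(s_{n+1} ≤ q̂) ≥ 1 - α. -/
open Finset
open scoped ENNReal


open MeasureTheory

/-- The `k`-th smallest value (1-indexed) of a finite family `v : Fin n → ℝ`,
characterized as the least `t` such that at least `k` of the values are `≤ t`. -/
noncomputable def kthSmallest {n : ℕ} (v : Fin n → ℝ) (k : ℕ) : ℝ :=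
  sInf {t : ℝ | k ≤ (Finset.univ.filter fun i => v i ≤ t).card}


lemma card_filter_comp_equiv {m : ℕ} (π : Equiv.Perm (Fin m)) (p : Fin m → Prop) [DecidablePred p] :
    (univ.filter fun i => p (π i)).card = (univ.filter p).card := by
  apply Finset.card_bij (fun i _ => π i)
  · intro a ha; simp only [mem_filter, mem_univ, true_and] at ha ⊢; exact ha
  · intro a ha b hb h; exact π.injective h
  · intro b hb; refine ⟨π.symm b, ?_, by simp⟩
    simp only [mem_filter, mem_univ, true_and] at hb ⊢; simpa using hb

lemma card_rank_le {m : ℕ} (u : Fin m → ℝ) (hu : Function.Injective u) (k : ℕ) (hk : k ≤ m) :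
    k ≤ (univ.filter fun j => (univ.filter fun i => u i ≤ u j).card ≤ k).card := by
  classical
  set r : Fin m → ℕ := fun j => (univ.filter fun i => u i ≤ u j).card with hr
  show k ≤ (univ.filter fun j => r j ≤ k).card
  have hmono : ∀ j j', u j < u j' → r j < r j' := by
    intro j j' h
    apply Finset.card_lt_card
    constructor
    · intro i hi; simp only [mem_filter, mem_univ, true_and] at hi ⊢; linarith
    · intro hsub
      have : j' ∈ univ.filter fun i => u i ≤ u j' := by simp
      have := hsub this
      simp only [mem_filter, mem_univ, true_and] at this
      linarith
  have hinj : Function.Injective r := by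
    intro j j' h
    by_contra hne
    rcases lt_trichotomy (u j) (u j') with hlt | heq | hlt
    · exact absurd h (Nat.ne_of_lt (hmono _ _ hlt))
    · exact hne (hu heq)
    · exact absurd h.symm (Nat.ne_of_lt (hmono _ _ hlt))
  have hlem : ∀ j, r j ≤ m := by
    intro j
    simpa using Finset.card_filter_le univ (fun i => u i ≤ u j)
  have hcompl : (univ.filter fun j => ¬ r j ≤ k).card ≤ m - k := by
    have hmaps : ∀ j ∈ univ.filter (fun j => ¬ r j ≤ k), r j ∈ Finset.Icc (k+1) m := by
      intro j hj
      simp only [mem_filter, mem_univ, true_and, not_le] at hj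
      simp only [Finset.mem_Icc]
      exact ⟨hj, hlem j⟩
    have := Finset.card_le_card_of_injOn r hmaps hinj.injOn
    have hIcc : (Finset.Icc (k+1) m).card = m - k := by
      rw [Nat.card_Icc]; omega
    omega
  have hsplit := Finset.card_filter_add_card_filter_not
    (s := (univ : Finset (Fin m))) (p := fun j => r j ≤ k)
  simp only [Finset.card_univ, Fintype.card_fin] at hsplit
  omega

lemma le_kthSmallest {n : ℕ} (v : Fin n → ℝ) (x : ℝ) (k : ℕ) (hk1 : 1 ≤ k) (hkn : k ≤ n)
    (h : (univ.filter fun i => v i ≤ x).card < k) : x ≤ kthSmallest v k := by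
  classical
  apply le_csInf
  · obtain ⟨M, hM⟩ := Finite.exists_le v
    refine ⟨M, ?_⟩
    have : (univ.filter fun i => v i ≤ M) = univ := by
      apply Finset.filter_true_of_mem; intro i _; exact hM i
    simp only [Set.mem_setOf_eq, this, Finset.card_univ, Fintype.card_fin]
    exact hkn
  · intro t ht
    simp only [Set.mem_setOf_eq] at ht
    by_contra hlt
    push_neg at hlt
    have hsub : (univ.filter fun i => v i ≤ t) ⊆ (univ.filter fun i => v i ≤ x) := by
      intro i hi; simp only [mem_filter, mem_univ, true_and] at hi ⊢; linarith
    have := Finset.card_le_card hsub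
    omega


/-- Split conformal prediction coverage: if `s 0, …, s n` are exchangeable with
almost surely no ties, and `q̂` is the `⌈(1-α)(n+1)⌉`-th smallest of the first
`n` scores (with `q̂ = +∞`, i.e. automatic coverage, when this rank exceeds
`n`), then the last score is at most `q̂` with probability at least `1 - α`. -/
theorem conformal_quantile_coverage {Ω : Type*} [MeasurableSpace Ω]
    (μ : Measure Ω) [IsProbabilityMeasure μ]
    (n : ℕ) (s : Fin (n + 1) → Ω → ℝ) (hs : ∀ i, Measurable (s i))
    (hexch : ∀ π : Equiv.Perm (Fin (n + 1)),
      Measure.map (fun ω => fun i => s (π i) ω) μ =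
        Measure.map (fun ω => fun i => s i ω) μ)
    (hties : μ {ω | ∃ i j : Fin (n + 1), i ≠ j ∧ s i ω = s j ω} = 0)
    (α : ℝ) (hα : α ∈ Set.Ioo (0 : ℝ) 1) :
    ENNReal.ofReal (1 - α) ≤
      μ {ω | n < ⌈(1 - α) * (n + 1)⌉₊ ∨
        s (Fin.last n) ω ≤
          kthSmallest (fun i : Fin n => s i.castSucc ω) ⌈(1 - α) * (n + 1)⌉₊} := by
  classical
  obtain ⟨hα0, hα1⟩ := hα
  set k := ⌈(1 - α) * (n + 1)⌉₊ with hkdef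
  have hofreal1 : ENNReal.ofReal (1 - α) ≤ 1 := ENNReal.ofReal_le_one.mpr (by linarith)
  by_cases hkn : n < k
  · have hset : {ω | n < k ∨ s (Fin.last n) ω ≤
        kthSmallest (fun i : Fin n => s i.castSucc ω) k} = Set.univ := by
      ext ω; simp [hkn]
    rw [hset, measure_univ]; exact hofreal1
  · push_neg at hkn
    have hk1 : 1 ≤ k := by
      rw [hkdef]
      apply Nat.one_le_ceil_iff.mpr
      have h1α : (0:ℝ) < 1 - α := by linarith
      positivity
    -- the rank events
    set A : Fin (n + 1) → Set Ω :=
      fun j => {ω | (univ.filter fun i => s i ω ≤ s j ω).card ≤ k} with hA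
    have hmeasA : ∀ j, MeasurableSet (A j) := by
      intro j
      have hF : Measurable fun ω => ∑ i : Fin (n + 1), if s i ω ≤ s j ω then (1 : ℕ) else 0 :=
        Finset.measurable_sum _ fun i _ =>
          Measurable.ite (measurableSet_le (hs i) (hs j)) measurable_const measurable_const
      have : A j = (fun ω => ∑ i : Fin (n + 1), if s i ω ≤ s j ω then (1 : ℕ) else 0) ⁻¹'
          Set.Iic k := by
        ext ω
        simp only [hA, Set.mem_setOf_eq, Set.mem_preimage, Set.mem_Iic, Finset.card_filter]
      rw [this]
      exact hF measurableSet_Iic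
    -- exchangeability: all A j have the same measure
    have hAeq : ∀ j, μ (A j) = μ (A (Fin.last n)) := by
      intro j
      set B : Set (Fin (n + 1) → ℝ) :=
        {v | (univ.filter fun i => v i ≤ v (Fin.last n)).card ≤ k} with hB
      have hmeasB : MeasurableSet B := by
        have hF : Measurable fun v : Fin (n + 1) → ℝ =>
            ∑ i : Fin (n + 1), if v i ≤ v (Fin.last n) then (1 : ℕ) else 0 :=
          Finset.measurable_sum _ fun i _ =>
            Measurable.ite (measurableSet_le (measurable_pi_apply i)
              (measurable_pi_apply _)) measurable_const measurable_const
        have : B = (fun v : Fin (n + 1) → ℝ =>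
            ∑ i : Fin (n + 1), if v i ≤ v (Fin.last n) then (1 : ℕ) else 0) ⁻¹' Set.Iic k := by
          ext v
          simp only [hB, Set.mem_setOf_eq, Set.mem_preimage, Set.mem_Iic, Finset.card_filter]
        rw [this]
        exact hF measurableSet_Iic
      set π : Equiv.Perm (Fin (n + 1)) := Equiv.swap j (Fin.last n) with hπ
      have hf : Measurable fun ω => fun i => s i ω := measurable_pi_lambda _ hs
      have hg : Measurable fun ω => fun i => s (π i) ω := measurable_pi_lambda _ fun i => hs _
      have hmap : μ ((fun ω => fun i => s (π i) ω) ⁻¹' B) =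
          μ ((fun ω => fun i => s i ω) ⁻¹' B) := by
        rw [← Measure.map_apply hg hmeasB, ← Measure.map_apply hf hmeasB, hexch π]
      have hpre1 : (fun ω => fun i => s i ω) ⁻¹' B = A (Fin.last n) := rfl
      have hpre2 : (fun ω => fun i => s (π i) ω) ⁻¹' B = A j := by
        ext ω
        simp only [hB, Set.mem_preimage, Set.mem_setOf_eq, hA]
        have hπlast : π (Fin.last n) = j := Equiv.swap_apply_right _ _
        simp only [hπlast]
        rw [card_filter_comp_equiv π (fun i => s i ω ≤ s j ω)]
      rw [hpre1, hpre2] at hmap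
      exact hmap
    -- a.e. lower bound on the count
    have hcount : ∀ᵐ ω ∂μ, (k : ℝ≥0∞) ≤
        ∑ j : Fin (n + 1), (A j).indicator (fun _ => (1 : ℝ≥0∞)) ω := by
      rw [ae_iff]
      apply measure_mono_null _ hties
      intro ω hω
      simp only [Set.mem_setOf_eq, not_le] at hω
      simp only [Set.mem_setOf_eq]
      by_contra hinj
      push_neg at hinj
      have huinj : Function.Injective fun i => s i ω := by
        intro i j hij
        by_contra hne
        exact hne (False.elim ((hinj i j hne) hij))
      have hcard := card_rank_le (fun i => s i ω) huinj k (by omega)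
      have : ((univ.filter fun j =>
          (univ.filter fun i => s i ω ≤ s j ω).card ≤ k).card : ℝ≥0∞) ≤
          ∑ j : Fin (n + 1), (A j).indicator (fun _ => (1 : ℝ≥0∞)) ω := by
        rw [Finset.card_filter]
        push_cast
        apply Finset.sum_le_sum
        intro j _
        by_cases hj : (univ.filter fun i => s i ω ≤ s j ω).card ≤ k
        · simp [hj, Set.indicator_apply, hA, Set.mem_setOf_eq]
        · simp [hj]
      have hk' : (k : ℝ≥0∞) ≤ ((univ.filter fun j =>
          (univ.filter fun i => s i ω ≤ s j ω).card ≤ k).card : ℝ≥0∞) := by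
        exact_mod_cast hcard
      exact absurd (le_trans hk' this) (not_le.mpr hω)
    -- key inequality
    have hkey : (k : ℝ≥0∞) ≤ (n + 1) * μ (A (Fin.last n)) := by
      have h1 : (k : ℝ≥0∞) = ∫⁻ _, (k : ℝ≥0∞) ∂μ := by
        rw [lintegral_const, measure_univ, mul_one]
      rw [h1]
      calc ∫⁻ _, (k : ℝ≥0∞) ∂μ
          ≤ ∫⁻ ω, ∑ j : Fin (n + 1), (A j).indicator (fun _ => (1 : ℝ≥0∞)) ω ∂μ :=
            lintegral_mono_ae hcount
        _ = ∑ j : Fin (n + 1), ∫⁻ ω, (A j).indicator (fun _ => (1 : ℝ≥0∞)) ω ∂μ :=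
            lintegral_finset_sum _ fun j _ =>
              Measurable.indicator measurable_const (hmeasA j)
        _ = ∑ j : Fin (n + 1), μ (A j) := by
            refine Finset.sum_congr rfl fun j _ => ?_
            exact lintegral_indicator_one (hmeasA j)
        _ = ∑ _j : Fin (n + 1), μ (A (Fin.last n)) :=
            Finset.sum_congr rfl fun j _ => hAeq j
        _ = (n + 1) * μ (A (Fin.last n)) := by
            rw [Finset.sum_const, Finset.card_univ, Fintype.card_fin, nsmul_eq_mul]
            push_cast
            ring
    -- A (last) is contained in the target event
    have hsub : A (Fin.last n) ⊆ {ω | n < k ∨ s (Fin.last n) ω ≤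
        kthSmallest (fun i : Fin n => s i.castSucc ω) k} := by
      intro ω hω
      simp only [hA, Set.mem_setOf_eq] at hω
      right
      apply le_kthSmallest _ _ _ hk1 hkn
      have hsplit : (univ.filter fun i : Fin (n + 1) => s i ω ≤ s (Fin.last n) ω).card =
          (univ.filter fun i : Fin n => s i.castSucc ω ≤ s (Fin.last n) ω).card + 1 := by
        rw [Finset.card_filter, Finset.card_filter, Fin.sum_univ_castSucc]
        simp
      omega
    calc ENNReal.ofReal (1 - α) ≤ μ (A (Fin.last n)) := by
          have hne1 : ((n : ℝ≥0∞) + 1) ≠ 0 := by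
            exact Ne.symm (ne_of_lt (by exact_mod_cast Nat.succ_pos n))
          have hne2 : ((n : ℝ≥0∞) + 1) ≠ ⊤ := by
            simp [ENNReal.add_ne_top]
          rw [← ENNReal.mul_le_mul_iff_left hne1 hne2]
          calc ENNReal.ofReal (1 - α) * ((n : ℝ≥0∞) + 1)
              = ENNReal.ofReal ((1 - α) * (n + 1)) := by
                rw [ENNReal.ofReal_mul (by linarith)]
                congr 1
                rw [ENNReal.ofReal_add (by positivity) zero_le_one,
                  ENNReal.ofReal_natCast, ENNReal.ofReal_one]
            _ ≤ (k : ℝ≥0∞) := by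
                rw [← ENNReal.ofReal_natCast k]
                apply ENNReal.ofReal_le_ofReal
                rw [hkdef]
                exact_mod_cast Nat.le_ceil _
            _ ≤ ((n : ℝ≥0∞) + 1) * μ (A (Fin.last n)) := by
                exact_mod_cast hkey
            _ = μ (A (Fin.last n)) * ((n : ℝ≥0∞) + 1) := mul_comm _ _
      _ ≤ _ := measure_mono hsub
end
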